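/- Let c : X → ℝ be continuous, let φ_1,…,φ_N with φ_i : X_i → ℝ continuous, and define for each i, x_i ∈ X_i, x_{-i} ∈ X_{-i} the conditional density q_{-i}(x_{-i}|x_i) := exp(Σ_{j≠i} φ_j(x_j) − c(x_i,x_{-i})) / ∫_{X_{-i}} exp(Σ_{j≠i} φ_j(x_j') − c(x_i,x_{-i}')) dμ_{-i}(x_{-i}'). Suppose continuous functions h_i : X_i → ℝ and constants λ_1,…,λ_N ∈ ℝ with Σ_{i=1}^N λ_i = 0 satisfy, for every i and every x_i ∈ X_i, h_i(x_i) + ∫_{X_{-i}} (Σ_{j≠i} h_j(x_j)) q_{-i}(x_{-i}|x_i) dμ_{-i}(x_{-i}) = λ_i. Then λ_i = 0 for every i, and there exist constants κ_1,…,κ_N ∈ ℝ with Σ_{i=1}^N κ_i = 0 such that h_i(x_i) = κ_i for every i and every x_i ∈ X_i. -/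

import Mathlib

/-!
Put `G x = ∑ j, h j (x j)` and `p = exp (∑ j, φ j (x j) - c x)`. Clearing the denominator, the
equation for `h_i` says that the integral of `G p` over `x_{-i}` is `λ_i` times the marginal
density of `x_i`. Integrating it against `μ_i` gives `λ_i ∫ p = ∫ G p` for every `i`, so all `λ_i`
coincide and, summing to zero, vanish. Integrating it against `h_i(x_i) dμ_i` and summing over `i`
gives `∫ G² p = 0`, so `G = 0` almost everywhere for the product measure; since `G` is a sum of
functions of distinct coordinates, each `h_i` is almost everywhere a constant `κ_i`, with
`∑ κ_i = 0`. Put back into the equation at a point of `X_i`, where the marginal density is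
positive, this gives `h_i = κ_i` everywhere on `X_i`.
-/

open MeasureTheory Set Function

theorem eq_zero_of_sum_eq_zero_of_forall_eq {ι M : Type*} [Fintype ι] [AddCommMonoid M]
    [IsAddTorsionFree M] {a : ι → M} {b : M} (ha : ∀ i, a i = b) (hsum : ∑ i, a i = 0)
    (i : ι) : a i = 0 := by
  rw [Finset.sum_congr rfl fun j _ => ha j, Finset.sum_const, Finset.card_univ] at hsum
  rw [ha, (smul_eq_zero.mp hsum).resolve_left (Fintype.card_pos_iff.2 ⟨i⟩).ne']

theorem integral_pos_of_pos {α : Type*} [MeasurableSpace α] {μ : Measure α} [NeZero μ]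
    {f : α → ℝ} (hf : ∀ x, 0 < f x) (hfi : Integrable f μ) : 0 < ∫ x, f x ∂μ := by
  rw [integral_pos_iff_support_of_nonneg (fun x => (hf x).le) hfi]
  simp [support, (hf _).ne', NeZero.ne μ]

theorem ContinuousOn.integrable_of_ae_mem {α β : Type*} [TopologicalSpace α] [T2Space α]
    [MeasurableSpace α] [OpensMeasurableSpace α] [NormedAddCommGroup β] {μ : Measure α}
    [IsFiniteMeasure μ] {s : Set α} (hs : IsCompact s) (hμs : ∀ᵐ x ∂μ, x ∈ s) {f : α → β}
    (hf : ContinuousOn f s) : Integrable f μ := by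
  rw [← integrableOn_univ]
  exact (hf.integrableOn_compact hs).congr_set_ae (ae_eq_univ.mpr hμs).symm

section PiUpdate

variable {ι E β : Type*} [TopologicalSpace E] [TopologicalSpace β] {X : ι → Set E} {i : ι}

theorem ContinuousOn.comp_eval_univ_pi {g : E → β} (hg : ContinuousOn g (X i)) :
    ContinuousOn (fun x : ι → E => g (x i)) (univ.pi X) :=
  hg.comp (continuous_apply i).continuousOn fun _ hx => hx i (mem_univ i)

theorem ContinuousOn.comp_update_univ_pi [DecidableEq ι] {f : (ι → E) → β}
    (hf : ContinuousOn f (univ.pi X)) {t : E} (ht : t ∈ X i) :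
    ContinuousOn (fun y => f (update y i t)) (univ.pi X) :=
  hf.comp (by fun_prop) fun _ hy => (update_mem_pi_iff_of_mem hy).2 fun _ => ht

end PiUpdate

section CoordSum

variable {ι E : Type*} [Fintype ι] [DecidableEq ι]

def coordSum (h : ι → E → ℝ) (x : ι → E) : ℝ := ∑ j, h j (x j)

theorem coordSum_update (h : ι → E → ℝ) (y : ι → E) (i : ι) (t : E) :
    coordSum h (update y i t) = h i t + ∑ j ∈ Finset.univ.erase i, h j (y j) := by
  rw [coordSum, ← Finset.add_sum_erase _ _ (Finset.mem_univ i), update_self]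
  congr 1
  exact Finset.sum_congr rfl fun j hj => by rw [update_of_ne (Finset.ne_of_mem_erase hj)]

theorem coordSum_update_eq_sub_add (h : ι → E → ℝ) (y : ι → E) (i : ι) (t : E) :
    coordSum h (update y i t) = coordSum h y - h i (y i) + h i t := by
  conv_rhs => rw [← update_eq_self i y, coordSum_update]
  rw [coordSum_update, update_self]
  ring

end CoordSum

section SliceIntegral

variable {ι E : Type*} [Fintype ι] [DecidableEq ι] [MeasurableSpace E] (μ : ι → Measure E)

/-- The integral over `x_{-i}` with `x_i = t`: the coordinate `y i` is overwritten, and the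
probability measure `μ i` it is integrated against does not contribute. -/
noncomputable def sliceIntegral (f : (ι → E) → ℝ) (i : ι) (t : E) : ℝ :=
  ∫ y, f (update y i t) ∂Measure.pi μ

theorem sliceIntegral_mul_left (g : E → ℝ) (f : (ι → E) → ℝ) (i : ι) (t : E) :
    sliceIntegral μ (fun x => g (x i) * f x) i t = g t * sliceIntegral μ f i t := by
  simp only [sliceIntegral, update_self, integral_const_mul]

theorem sliceIntegral_coordSum_mul_eq_of_add_integral_eq {h : ι → E → ℝ} {p : (ι → E) → ℝ}
    {i : ι} {t : E} {c : ℝ} (hp : sliceIntegral μ p i t ≠ 0)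
    (hpi : Integrable (fun y => p (update y i t)) (Measure.pi μ))
    (hHp : Integrable (fun y => (∑ j ∈ Finset.univ.erase i, h j (y j)) * p (update y i t))
      (Measure.pi μ))
    (hmean : h i t + ∫ y, (∑ j ∈ Finset.univ.erase i, h j (y j)) *
      (p (update y i t) / sliceIntegral μ p i t) ∂Measure.pi μ = c) :
    sliceIntegral μ (fun x => coordSum h x * p x) i t = c * sliceIntegral μ p i t := by
  have hsplit : sliceIntegral μ (fun x => coordSum h x * p x) i t
      = h i t * sliceIntegral μ p i t
        + ∫ y, (∑ j ∈ Finset.univ.erase i, h j (y j)) * p (update y i t) ∂Measure.pi μ := by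
    rw [sliceIntegral, sliceIntegral, ← integral_const_mul, ← integral_add (hpi.const_mul _) hHp]
    simp_rw [coordSum_update, add_mul]
  simp_rw [← hmean, ← mul_div_assoc, integral_div, hsplit]
  field_simp

variable [∀ i, IsProbabilityMeasure (μ i)] (i : ι)

theorem measurePreserving_update_prod :
    MeasurePreserving (fun p : E × (ι → E) => update p.2 i p.1)
      ((μ i).prod (Measure.pi μ)) (Measure.pi μ) := by
  refine ⟨by fun_prop, (Measure.pi_eq fun s hs => ?_).symm⟩
  have hpre : (fun p : E × (ι → E) => update p.2 i p.1) ⁻¹' univ.pi s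
      = s i ×ˢ univ.pi (update s i univ) := by
    ext ⟨t, y⟩
    simp only [mem_preimage, mem_prod, mem_univ_pi]
    refine ⟨fun h => ⟨by simpa using h i, fun j => ?_⟩, fun ⟨ht, hy⟩ j => ?_⟩ <;>
      rcases eq_or_ne j i with rfl | hj
    · simp
    · simpa [hj] using h j
    · simpa using ht
    · simpa [hj] using hy j
  have hμ : ∀ j, μ j (update s i univ j) = update (fun k => μ k (s k)) i 1 j := fun j => by
    rcases eq_or_ne j i with rfl | hj <;> simp [*]
  rw [Measure.map_apply (by fun_prop) (.univ_pi hs), hpre, Measure.prod_prod,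
    Measure.pi_pi, Finset.prod_congr rfl fun j _ => hμ j,
    Finset.prod_update_of_mem (Finset.mem_univ i), one_mul, Finset.sdiff_singleton_eq_erase,
    Finset.mul_prod_erase _ (fun j => μ j (s j)) (Finset.mem_univ i)]

theorem ae_ae_update {p : (ι → E) → Prop} (hp : ∀ᵐ x ∂Measure.pi μ, p x) :
    ∀ᵐ t ∂μ i, ∀ᵐ y ∂Measure.pi μ, p (update y i t) :=
  Measure.ae_ae_of_ae_prod ((measurePreserving_update_prod μ i).quasiMeasurePreserving.ae hp)

theorem integral_sliceIntegral {f : (ι → E) → ℝ} (hf : Integrable f (Measure.pi μ)) :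
    ∫ t, sliceIntegral μ f i t ∂μ i = ∫ x, f x ∂Measure.pi μ := by
  have hmp := measurePreserving_update_prod μ i
  calc ∫ t, sliceIntegral μ f i t ∂μ i
      = ∫ p, f (update p.2 i p.1) ∂(μ i).prod (Measure.pi μ) :=
        (integral_prod _ (hmp.integrable_comp_of_integrable hf)).symm
    _ = ∫ x, f x ∂Measure.pi μ := by
        rw [← integral_map hmp.measurable.aemeasurable (by rw [hmp.map_eq]; exact hf.1),
          hmp.map_eq]

end SliceIntegral

section Kernel

variable {ι E : Type*} [Fintype ι] [DecidableEq ι] [MeasurableSpace E]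
  {μ : ι → Measure E} [∀ i, IsProbabilityMeasure (μ i)]

theorem integral_eq_mul_of_sliceIntegral_ae_eq {f p : (ι → E) → ℝ} {c : ℝ} {i : ι}
    (hf : Integrable f (Measure.pi μ)) (hp : Integrable p (Measure.pi μ))
    (h : ∀ᵐ t ∂μ i, sliceIntegral μ f i t = c * sliceIntegral μ p i t) :
    ∫ x, f x ∂Measure.pi μ = c * ∫ x, p x ∂Measure.pi μ := by
  rw [← integral_sliceIntegral μ i hf, integral_congr_ae h, integral_const_mul,
    integral_sliceIntegral μ i hp]

theorem coordSum_ae_eq_zero {h : ι → E → ℝ} {p : (ι → E) → ℝ} (hp : ∀ x, 0 < p x)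
    (hint : ∀ i, Integrable (fun x => h i (x i) * (coordSum h x * p x)) (Measure.pi μ))
    (hslice : ∀ i, ∀ᵐ t ∂μ i, sliceIntegral μ (fun x => coordSum h x * p x) i t = 0) :
    coordSum h =ᵐ[Measure.pi μ] 0 := by
  have hcomponent : ∀ i, ∫ x, h i (x i) * (coordSum h x * p x) ∂Measure.pi μ = 0 := fun i => by
    rw [← integral_sliceIntegral μ i (hint i)]
    simp_rw [sliceIntegral_mul_left]
    exact integral_eq_zero_of_ae ((hslice i).mono fun t ht => by simp [ht])
  have hsum : (fun x => coordSum h x * (coordSum h x * p x))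
      = fun x => ∑ i, h i (x i) * (coordSum h x * p x) := by
    ext x; exact Finset.sum_mul _ _ _
  have hsq : ∫ x, coordSum h x * (coordSum h x * p x) ∂Measure.pi μ = 0 := by
    rw [hsum, integral_finsetSum _ fun i _ => hint i]
    exact Finset.sum_eq_zero fun i _ => hcomponent i
  have hnonneg : 0 ≤ fun x => coordSum h x * (coordSum h x * p x) := fun x => by
    simpa only [Pi.zero_apply, ← mul_assoc] using mul_nonneg (mul_self_nonneg _) (hp x).le
  have hint_sq : Integrable (fun x => coordSum h x * (coordSum h x * p x)) (Measure.pi μ) := by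
    rw [hsum]; exact integrable_finsetSum _ fun i _ => hint i
  filter_upwards [(integral_eq_zero_iff_of_nonneg hnonneg hint_sq).mp hsq] with x hx
  simpa [(hp x).ne'] using hx

theorem exists_ae_eq_const_of_coordSum_ae_eq_zero {h : ι → E → ℝ}
    (hG : coordSum h =ᵐ[Measure.pi μ] 0) :
    ∃ κ : ι → ℝ, ∑ i, κ i = 0 ∧ ∀ i, h i =ᵐ[μ i] fun _ => κ i := by
  have hconst : ∀ i, h i =ᵐ[μ i] fun _ => ∫ y, (h i (y i) - coordSum h y) ∂Measure.pi μ := by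
    intro i
    filter_upwards [ae_ae_update μ i hG] with t ht
    have hy : (fun y => h i (y i) - coordSum h y) =ᵐ[Measure.pi μ] fun _ => h i t := by
      filter_upwards [ht] with y hy
      rw [Pi.zero_apply, coordSum_update_eq_sub_add] at hy
      linarith
    simp [integral_congr_ae hy]
  refine ⟨_, ?_, hconst⟩
  have hcoord : ∀ᵐ x ∂Measure.pi μ, ∀ i,
      h i (x i) = ∫ y, (h i (y i) - coordSum h y) ∂Measure.pi μ :=
    ae_all_iff.2 fun i => Measure.tendsto_eval_ae_ae.eventually (hconst i)
  obtain ⟨x, hx0, hx⟩ := (hG.and hcoord).exists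
  rw [← Finset.sum_congr rfl fun i _ => hx i]
  exact hx0

theorem eq_of_sliceIntegral_coordSum_mul_eq_zero {h : ι → E → ℝ} {p : (ι → E) → ℝ} {κ : ι → ℝ}
    {i : ι} {t : E} (hG : coordSum h =ᵐ[Measure.pi μ] 0) (hκ : h i =ᵐ[μ i] fun _ => κ i)
    (hp : sliceIntegral μ p i t ≠ 0)
    (hslice : sliceIntegral μ (fun x => coordSum h x * p x) i t = 0) : h i t = κ i := by
  have hfactor : sliceIntegral μ (fun x => coordSum h x * p x) i t
      = (h i t - κ i) * sliceIntegral μ p i t := by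
    rw [sliceIntegral, sliceIntegral, ← integral_const_mul]
    refine integral_congr_ae ?_
    filter_upwards [hG, Measure.tendsto_eval_ae_ae.eventually hκ] with y hy hyi
    rw [coordSum_update_eq_sub_add, hy, hyi, Pi.zero_apply]
    ring
  rw [hfactor] at hslice
  exact sub_eq_zero.mp ((mul_eq_zero.mp hslice).resolve_right hp)

end Kernel

section Compact

variable {ι E : Type*} [Fintype ι] [TopologicalSpace E] [T2Space E] [SecondCountableTopology E]
  [MeasurableSpace E] [OpensMeasurableSpace E] {μ : ι → Measure E}
  [∀ i, IsProbabilityMeasure (μ i)] {X : ι → Set E}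

theorem integrable_of_continuousOn_univ_pi (hX : ∀ i, IsCompact (X i))
    (hμX : ∀ i, ∀ᵐ t ∂μ i, t ∈ X i) {f : (ι → E) → ℝ} (hf : ContinuousOn f (univ.pi X)) :
    Integrable f (Measure.pi μ) :=
  hf.integrable_of_ae_mem (isCompact_univ_pi hX)
    ((ae_all_iff.2 fun i => Measure.tendsto_eval_ae_ae.eventually (hμX i)).mono
      fun _ hx => mem_univ_pi.2 hx)

variable [DecidableEq ι]

theorem sliceIntegral_pos (hX : ∀ i, IsCompact (X i)) (hμX : ∀ i, ∀ᵐ t ∂μ i, t ∈ X i)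
    {p : (ι → E) → ℝ} (hp_pos : ∀ x, 0 < p x) (hp : ContinuousOn p (univ.pi X)) {i : ι} {t : E}
    (ht : t ∈ X i) : 0 < sliceIntegral μ p i t :=
  integral_pos_of_pos (fun _ => hp_pos _)
    (integrable_of_continuousOn_univ_pi hX hμX (hp.comp_update_univ_pi ht))

theorem eq_const_of_sliceIntegral_coordSum_mul_eq (hX : ∀ i, IsCompact (X i))
    (hμX : ∀ i, ∀ᵐ t ∂μ i, t ∈ X i) {p : (ι → E) → ℝ} (hp_pos : ∀ x, 0 < p x)
    (hp : ContinuousOn p (univ.pi X)) {h : ι → E → ℝ} (hh : ∀ i, ContinuousOn (h i) (X i))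
    {c : ι → ℝ} (hc : ∑ i, c i = 0)
    (hslice : ∀ i, ∀ t ∈ X i,
      sliceIntegral μ (fun x => coordSum h x * p x) i t = c i * sliceIntegral μ p i t) :
    (∀ i, c i = 0) ∧ ∃ κ : ι → ℝ, ∑ i, κ i = 0 ∧ ∀ i, ∀ t ∈ X i, h i t = κ i := by
  have hint : ∀ f : (ι → E) → ℝ, ContinuousOn f (univ.pi X) → Integrable f (Measure.pi μ) :=
    fun _ => integrable_of_continuousOn_univ_pi hX hμX
  have hG : ContinuousOn (coordSum h) (univ.pi X) :=
    continuousOn_finsetSum _ fun i _ => (hh i).comp_eval_univ_pi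
  have hc_eq : ∀ i, c i = (∫ x, coordSum h x * p x ∂Measure.pi μ) / ∫ x, p x ∂Measure.pi μ :=
    fun i => eq_div_of_mul_eq (integral_pos_of_pos hp_pos (hint p hp)).ne'
      (integral_eq_mul_of_sliceIntegral_ae_eq (hint _ (hG.mul hp)) (hint p hp)
        ((hμX i).mono (hslice i))).symm
  have hc0 : ∀ i, c i = 0 := eq_zero_of_sum_eq_zero_of_forall_eq hc_eq hc
  have hslice0 : ∀ i, ∀ t ∈ X i, sliceIntegral μ (fun x => coordSum h x * p x) i t = 0 :=
    fun i t ht => by rw [hslice i t ht, hc0, zero_mul]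
  have hG0 : coordSum h =ᵐ[Measure.pi μ] 0 :=
    coordSum_ae_eq_zero hp_pos (fun i => hint _ ((hh i).comp_eval_univ_pi.mul (hG.mul hp)))
      fun i => (hμX i).mono (hslice0 i)
  obtain ⟨κ, hκ, hκ_ae⟩ := exists_ae_eq_const_of_coordSum_ae_eq_zero hG0
  exact ⟨hc0, κ, hκ, fun i t ht => eq_of_sliceIntegral_coordSum_mul_eq_zero hG0 (hκ_ae i)
    (sliceIntegral_pos hX hμX hp_pos hp ht).ne' (hslice0 i t ht)⟩

theorem eq_const_of_add_integral_eq (hX : ∀ i, IsCompact (X i))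
    (hμX : ∀ i, ∀ᵐ t ∂μ i, t ∈ X i) {p : (ι → E) → ℝ} (hp_pos : ∀ x, 0 < p x)
    (hp : ContinuousOn p (univ.pi X)) {h : ι → E → ℝ} (hh : ∀ i, ContinuousOn (h i) (X i))
    {c : ι → ℝ} (hc : ∑ i, c i = 0)
    (hmean : ∀ i, ∀ t ∈ X i, h i t + ∫ y, (∑ j ∈ Finset.univ.erase i, h j (y j)) *
      (p (update y i t) / sliceIntegral μ p i t) ∂Measure.pi μ = c i) :
    (∀ i, c i = 0) ∧ ∃ κ : ι → ℝ, ∑ i, κ i = 0 ∧ ∀ i, ∀ t ∈ X i, h i t = κ i := by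
  refine eq_const_of_sliceIntegral_coordSum_mul_eq hX hμX hp_pos hp hh hc fun i t ht => ?_
  have hpt : ContinuousOn (fun y => p (update y i t)) (univ.pi X) := hp.comp_update_univ_pi ht
  have hH : ContinuousOn (fun y => ∑ j ∈ Finset.univ.erase i, h j (y j)) (univ.pi X) :=
    continuousOn_finsetSum _ fun j _ => (hh j).comp_eval_univ_pi
  exact sliceIntegral_coordSum_mul_eq_of_add_integral_eq μ
    (sliceIntegral_pos hX hμX hp_pos hp ht).ne' (integrable_of_continuousOn_univ_pi hX hμX hpt)
    (integrable_of_continuousOn_univ_pi hX hμX (hH.mul hpt)) (hmean i t ht)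

end Compact

theorem schrodinger_linearization_kernel_general
    (N d : ℕ)
    (X : Fin N → Set (EuclideanSpace ℝ (Fin d)))
    (hXcpt : ∀ i, IsCompact (X i))
    (c : (Fin N → EuclideanSpace ℝ (Fin d)) → ℝ)
    (hc : ContinuousOn c (Set.univ.pi X))
    (μ : Fin N → Measure (EuclideanSpace ℝ (Fin d)))
    (hμp : ∀ i, IsProbabilityMeasure (μ i)) (hμs : ∀ i, μ i (X i) = 1)
    (φ : Fin N → EuclideanSpace ℝ (Fin d) → ℝ)
    (hφ : ∀ i, ContinuousOn (φ i) (X i))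
    (h : Fin N → EuclideanSpace ℝ (Fin d) → ℝ)
    (hh : ∀ i, ContinuousOn (h i) (X i))
    (lam : Fin N → ℝ) (hlam : (∑ i, lam i) = 0)
    (heq : ∀ i : Fin N, ∀ xi ∈ X i,
      h i xi + (∫ y, (∑ j ∈ Finset.univ.erase i, h j (y j)) *
          (Real.exp ((∑ j ∈ Finset.univ.erase i, φ j (y j)) - c (Function.update y i xi)) /
            ∫ y', Real.exp ((∑ j ∈ Finset.univ.erase i, φ j (y' j))
              - c (Function.update y' i xi)) ∂(Measure.pi μ))
        ∂(Measure.pi μ)) = lam i) :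
    (∀ i, lam i = 0) ∧
    ∃ κ : Fin N → ℝ, (∑ i, κ i) = 0 ∧ ∀ i : Fin N, ∀ xi ∈ X i, h i xi = κ i := by
  have hμX : ∀ i, ∀ᵐ t ∂μ i, t ∈ X i := fun i =>
    (ae_mem_iff_measure_eq (hXcpt i).isClosed.measurableSet.nullMeasurableSet).2
      (by rw [hμs, measure_univ])
  set p : (Fin N → EuclideanSpace ℝ (Fin d)) → ℝ := fun x => Real.exp (coordSum φ x - c x)
  have hp : ContinuousOn p (univ.pi X) :=
    ((continuousOn_finsetSum _ fun i _ => (hφ i).comp_eval_univ_pi).sub hc).rexp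
  refine eq_const_of_add_integral_eq hXcpt hμX (fun x => Real.exp_pos _) hp hh hlam
    fun i t ht => ?_
  have hweight : ∀ y, Real.exp ((∑ j ∈ Finset.univ.erase i, φ j (y j)) - c (update y i t))
      = Real.exp (-φ i t) * p (update y i t) := fun y => by
    rw [← Real.exp_add, coordSum_update]
    ring_nf
  have hmean := heq i t ht
  simp only [hweight, integral_const_mul, mul_div_mul_left _ _ (Real.exp_pos _).ne'] at hmean
  exact hmean

/-- The kernel of `Id + L` is trivial: if continuous functions `h_i` and
constants `λ_i` summing to zero satisfy
`h_i(x_i) + ∫ (Σ_{j≠i} h_j(x_j)) q_{-i}(x_{-i}|x_i) dμ_{-i}(x_{-i}) = λ_i` on `X_i` for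
every `i`, then all `λ_i = 0` and each `h_i` is constant on `X_i`, the constants summing
to zero. -/
theorem schrodinger_linearization_kernel
    (N d : ℕ) (hN : 2 ≤ N) (hd : 1 ≤ d)
    (X : Fin N → Set (EuclideanSpace ℝ (Fin d)))
    (hXne : ∀ i, (X i).Nonempty) (hXcpt : ∀ i, IsCompact (X i)) (hXcvx : ∀ i, Convex ℝ (X i))
    (c : (Fin N → EuclideanSpace ℝ (Fin d)) → ℝ)
    (hc : ContinuousOn c (Set.univ.pi X))
    (μ : Fin N → Measure (EuclideanSpace ℝ (Fin d)))
    (hμp : ∀ i, IsProbabilityMeasure (μ i)) (hμs : ∀ i, μ i (X i) = 1)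
    (φ : Fin N → EuclideanSpace ℝ (Fin d) → ℝ)
    (hφ : ∀ i, ContinuousOn (φ i) (X i))
    (h : Fin N → EuclideanSpace ℝ (Fin d) → ℝ)
    (hh : ∀ i, ContinuousOn (h i) (X i))
    (lam : Fin N → ℝ) (hlam : (∑ i, lam i) = 0)
    (heq : ∀ i : Fin N, ∀ xi ∈ X i,
      h i xi + (∫ y, (∑ j ∈ Finset.univ.erase i, h j (y j)) *
          (Real.exp ((∑ j ∈ Finset.univ.erase i, φ j (y j)) - c (Function.update y i xi)) /
            ∫ y', Real.exp ((∑ j ∈ Finset.univ.erase i, φ j (y' j))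
              - c (Function.update y' i xi)) ∂(Measure.pi μ))
        ∂(Measure.pi μ)) = lam i) :
    (∀ i, lam i = 0) ∧
    ∃ κ : Fin N → ℝ, (∑ i, κ i) = 0 ∧ ∀ i : Fin N, ∀ xi ∈ X i, h i xi = κ i :=
  schrodinger_linearization_kernel_general N d X hXcpt c hc μ hμp hμs φ hφ h hh lam hlam heq
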